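/- For every n ≥ 1, 4·α(n)^2·γ(n)^2·(4 + γ(n)) / (α(n)^2·γ(n)^3·(1 + α(n)^{-1}) + 64·β(n)^3) < γ(n+1) < γ(n)^2·(3 + γ(n) + β(n)) / 16. -/

import Mathlib

/-- One step of the recursion for the ice-model boundary counts
`(pa, pb, pc, pd)` on the Sierpinski gasket `SG(n)`. -/
def iceStep : ℕ × ℕ × ℕ × ℕ → ℕ × ℕ × ℕ × ℕ
  | (a, b, c, d) =>
    ((a + b) ^ 2 * (a + 3 * c + d),
     (a + b) ^ 2 * (b + 3 * c + d),
     a ^ 2 * b + b ^ 2 * a + (3 * c + d) ^ 3,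
     a ^ 3 + b ^ 3 + (3 * c + d) ^ 3)

/-- The quadruple `(pa(n), pb(n), pc(n), pd(n))`. -/
def iceSeq : ℕ → ℕ × ℕ × ℕ × ℕ
  | 0 => (0, 1, 0, 1)
  | n + 1 => iceStep (iceSeq n)

def pa (n : ℕ) : ℕ := (iceSeq n).1
def pb (n : ℕ) : ℕ := (iceSeq n).2.1
def pc (n : ℕ) : ℕ := (iceSeq n).2.2.1
def pd (n : ℕ) : ℕ := (iceSeq n).2.2.2

noncomputable def alphaSeq (n : ℕ) : ℝ := (pa n : ℝ) / (pb n : ℝ)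
noncomputable def betaSeq (n : ℕ) : ℝ := (pd n : ℝ) / (pc n : ℝ)
noncomputable def gammaSeq (n : ℕ) : ℝ := (pb n : ℝ) / (pc n : ℝ)

/-!
Writing `a, b, c, d` for `pa n, pb n, pc n, pd n`, one has `a < b` and `c ≤ d` for all `n`, and
`γ(n+1) = (a+b)²(b+3c+d) / (ab(a+b) + (3c+d)³)`. Both bounds follow by comparing numerator and
denominator separately: `4c ≤ 3c+d ≤ 4d` bounds the cube `(3c+d)³` between `64c³` and `64d³`,
and `2a < a+b < 2b` bounds `(a+b)²`. The left and right sides of the statement are exactly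
`4a²(4c+b) / (ab(a+b) + 64d³)` and `b²(3c+b+d) / (16c³)` written in `α, β, γ`.
-/

lemma pa_succ (n : ℕ) : pa (n + 1) = (pa n + pb n) ^ 2 * (pa n + 3 * pc n + pd n) := rfl
lemma pb_succ (n : ℕ) : pb (n + 1) = (pa n + pb n) ^ 2 * (pb n + 3 * pc n + pd n) := rfl
lemma pc_succ (n : ℕ) :
    pc (n + 1) = pa n ^ 2 * pb n + pb n ^ 2 * pa n + (3 * pc n + pd n) ^ 3 := rfl
lemma pd_succ (n : ℕ) : pd (n + 1) = pa n ^ 3 + pb n ^ 3 + (3 * pc n + pd n) ^ 3 := rfl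

lemma Nat.sq_mul_add_sq_mul_le_pow_three_add_pow_three (a b : ℕ) :
    a ^ 2 * b + b ^ 2 * a ≤ a ^ 3 + b ^ 3 := by
  zify
  nlinarith [mul_nonneg (by positivity : (0 : ℤ) ≤ a + b) (sq_nonneg ((a : ℤ) - b))]

lemma pa_lt_pb (n : ℕ) : pa n < pb n := by
  induction n with
  | zero => decide
  | succ n ih =>
    rw [pa_succ, pb_succ]
    exact Nat.mul_lt_mul_of_pos_left (by omega) (pow_pos (by omega) 2)

lemma pd_pos (n : ℕ) : 0 < pd n := by
  cases n with
  | zero => decide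
  | succ n =>
    rw [pd_succ]
    exact add_pos_of_pos_of_nonneg
      (add_pos_of_nonneg_of_pos (Nat.zero_le _) (pow_pos (pa_lt_pb n).pos 3)) (Nat.zero_le _)

lemma pc_le_pd (n : ℕ) : pc n ≤ pd n := by
  cases n with
  | zero => decide
  | succ n =>
    rw [pc_succ, pd_succ]
    exact Nat.add_le_add_right (Nat.sq_mul_add_sq_mul_le_pow_three_add_pow_three _ _) _

lemma pa_pos {n : ℕ} (hn : n ≠ 0) : 0 < pa n := by
  obtain ⟨n, rfl⟩ := Nat.exists_eq_succ_of_ne_zero hn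
  have := pa_lt_pb n
  have := pd_pos n
  rw [pa_succ]
  exact Nat.mul_pos (pow_pos (by omega) 2) (by omega)

lemma pc_pos {n : ℕ} (hn : n ≠ 0) : 0 < pc n := by
  obtain ⟨n, rfl⟩ := Nat.exists_eq_succ_of_ne_zero hn
  have := pd_pos n
  rw [pc_succ]
  exact add_pos_of_nonneg_of_pos (Nat.zero_le _) (pow_pos (by omega) 3)

noncomputable def gammaStep (a b c d : ℝ) : ℝ :=
  (a + b) ^ 2 * (b + 3 * c + d) / (a ^ 2 * b + b ^ 2 * a + (3 * c + d) ^ 3)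

lemma gammaSeq_succ (n : ℕ) : gammaSeq (n + 1) = gammaStep (pa n) (pb n) (pc n) (pd n) := by
  rw [gammaSeq, gammaStep, pb_succ, pc_succ]
  push_cast
  rfl

section Bounds

variable {a b c d : ℝ}

lemma ratio_lower_bound_eq (ha : a ≠ 0) (hb : b ≠ 0) (hc : c ≠ 0) :
    4 * (a / b) ^ 2 * (b / c) ^ 2 * (4 + b / c) /
        ((a / b) ^ 2 * (b / c) ^ 3 * (1 + (a / b)⁻¹) + 64 * (d / c) ^ 3) =
      4 * a ^ 2 * (4 * c + b) / (a * b * (a + b) + 64 * d ^ 3) := by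
  rw [inv_div]
  field_simp

lemma ratio_upper_bound_eq (hc : c ≠ 0) :
    (b / c) ^ 2 * (3 + b / c + d / c) / 16 = b ^ 2 * (3 * c + b + d) / (16 * c ^ 3) := by
  field_simp

lemma lt_gammaStep (ha : 0 ≤ a) (hab : a < b) (hc : 0 < c) (hcd : c ≤ d) :
    4 * a ^ 2 * (4 * c + b) / (a * b * (a + b) + 64 * d ^ 3) < gammaStep a b c d := by
  have hb : 0 < b := ha.trans_lt hab
  have hd : 0 < d := hc.trans_le hcd
  have hnum : 4 * a ^ 2 * (4 * c + b) < (a + b) ^ 2 * (b + 3 * c + d) :=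
    calc 4 * a ^ 2 * (4 * c + b) = (2 * a) ^ 2 * (b + 4 * c) := by ring
      _ < (a + b) ^ 2 * (b + 4 * c) := by gcongr; linarith
      _ ≤ (a + b) ^ 2 * (b + 3 * c + d) := by gcongr ?_ * ?_; linarith
  have hden : a ^ 2 * b + b ^ 2 * a + (3 * c + d) ^ 3 ≤ a * b * (a + b) + 64 * d ^ 3 := by
    nlinarith [pow_le_pow_left₀ (by positivity) (by linarith : 3 * c + d ≤ 4 * d) 3]
  rw [gammaStep]
  calc 4 * a ^ 2 * (4 * c + b) / (a * b * (a + b) + 64 * d ^ 3)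
      < (a + b) ^ 2 * (b + 3 * c + d) / (a * b * (a + b) + 64 * d ^ 3) :=
        div_lt_div_of_pos_right hnum (by positivity)
    _ ≤ (a + b) ^ 2 * (b + 3 * c + d) / (a ^ 2 * b + b ^ 2 * a + (3 * c + d) ^ 3) :=
        div_le_div_of_nonneg_left (by positivity) (by positivity) hden

lemma gammaStep_lt (ha : 0 ≤ a) (hab : a < b) (hc : 0 < c) (hcd : c ≤ d) :
    gammaStep a b c d < b ^ 2 * (3 * c + b + d) / (16 * c ^ 3) := by
  have hb : 0 < b := ha.trans_lt hab
  have hd : 0 < d := hc.trans_le hcd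
  have hden : 64 * c ^ 3 ≤ a ^ 2 * b + b ^ 2 * a + (3 * c + d) ^ 3 := by
    nlinarith [pow_le_pow_left₀ (by positivity) (by linarith : 4 * c ≤ 3 * c + d) 3]
  rw [gammaStep]
  calc (a + b) ^ 2 * (b + 3 * c + d) / (a ^ 2 * b + b ^ 2 * a + (3 * c + d) ^ 3)
      ≤ (a + b) ^ 2 * (b + 3 * c + d) / (64 * c ^ 3) :=
        div_le_div_of_nonneg_left (by positivity) (by positivity) hden
    _ < (2 * b) ^ 2 * (b + 3 * c + d) / (64 * c ^ 3) := by
        gcongr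
        linarith
    _ = b ^ 2 * (3 * c + b + d) / (16 * c ^ 3) := by
        field_simp
        ring

end Bounds

theorem stmt_4 (n : ℕ) (hn : 1 ≤ n) :
    4 * alphaSeq n ^ 2 * gammaSeq n ^ 2 * (4 + gammaSeq n) /
        (alphaSeq n ^ 2 * gammaSeq n ^ 3 * (1 + (alphaSeq n)⁻¹) + 64 * betaSeq n ^ 3) <
      gammaSeq (n + 1) ∧
    gammaSeq (n + 1) < gammaSeq n ^ 2 * (3 + gammaSeq n + betaSeq n) / 16 := by
  have ha : (0 : ℝ) < pa n := mod_cast pa_pos (by omega)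
  have hab : (pa n : ℝ) < pb n := mod_cast pa_lt_pb n
  have hc : (0 : ℝ) < pc n := mod_cast pc_pos (by omega)
  have hcd : (pc n : ℝ) ≤ pd n := mod_cast pc_le_pd n
  rw [gammaSeq_succ, alphaSeq, betaSeq, gammaSeq,
    ratio_lower_bound_eq ha.ne' (ha.trans hab).ne' hc.ne', ratio_upper_bound_eq hc.ne']
  exact ⟨lt_gammaStep ha.le hab hc hcd, gammaStep_lt ha.le hab hc hcd⟩
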